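/- The linear map σ: NS → R defined by σ(L_m) = (1/2) L_{2m} for m ∈ ℤ and σ(G_r) = (1/√2) G_{2r} for r ∈ 1/2 + ℤ is an injective homomorphism of Lie superalgebras from the Neveu-Schwarz algebra to the Ramond algebra. -/
import Mathlib


/-- The underlying space of either super-Virasoro algebra (without center): the first
`ℤ →₀ ℂ` records coefficients of the even basis `L_n` (`n ∈ ℤ`); the second records
coefficients of the odd basis, indexed so that for the Neveu-Schwarz algebra the index
`k ∈ ℤ` stands for `G_{k+1/2}`, while for the Ramond algebra it stands for `G_k`. -/
abbrev SVSpace : Type := (ℤ →₀ ℂ) × (ℤ →₀ ℂ)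

/-- The super-bracket of the Neveu-Schwarz algebra:
`[L_m,L_n]=(m−n)L_{m+n}`, `[L_m,G_r]=(m/2−r)G_{m+r}`, `[G_r,G_s]=2L_{r+s}`,
with odd indices `r = k+1/2`, `s = j+1/2`, `k, j ∈ ℤ`. -/
noncomputable def nsBracket (x y : SVSpace) : SVSpace :=
  ( (x.1.sum fun m c => y.1.sum fun n d => Finsupp.single (m + n) (c * d * ((m : ℂ) - n)))
      + (x.2.sum fun k c => y.2.sum fun j d => Finsupp.single (k + j + 1) (c * d * 2)),
    (x.1.sum fun m c => y.2.sum fun k d =>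
        Finsupp.single (m + k) (c * d * ((m : ℂ) / 2 - ((k : ℂ) + 1/2))))
      - (y.1.sum fun m d => x.2.sum fun k c =>
        Finsupp.single (m + k) (d * c * ((m : ℂ) / 2 - ((k : ℂ) + 1/2)))) )

/-- The super-bracket of the Ramond algebra, with odd part indexed by `r ∈ ℤ`. -/
noncomputable def rBracket (x y : SVSpace) : SVSpace :=
  ( (x.1.sum fun m c => y.1.sum fun n d => Finsupp.single (m + n) (c * d * ((m : ℂ) - n)))
      + (x.2.sum fun k c => y.2.sum fun j d => Finsupp.single (k + j) (c * d * 2)),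
    (x.1.sum fun m c => y.2.sum fun k d =>
        Finsupp.single (m + k) (c * d * ((m : ℂ) / 2 - (k : ℂ))))
      - (y.1.sum fun m d => x.2.sum fun k c =>
        Finsupp.single (m + k) (d * c * ((m : ℂ) / 2 - (k : ℂ)))) )

/-- The map `σ : NS → R`, `σ(L_m) = (1/2) L_{2m}`, `σ(G_{k+1/2}) = (1/√2) G_{2k+1}`. -/
noncomputable def sigmaMap (x : SVSpace) : SVSpace :=
  ( x.1.sum fun m c => Finsupp.single (2 * m) (c / 2),
    x.2.sum fun k c => Finsupp.single (2 * k + 1) (c / (Real.sqrt 2 : ℂ)) )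

open Finsupp in
private lemma sumSingle {N : Type*} [AddCommMonoid N] (x : ℤ →₀ ℂ) (p : ℤ → ℤ)
    (φ : ℤ → ℂ → ℂ) (H : ℤ → ℂ → N) (h0 : ∀ a, H a 0 = 0)
    (hadd : ∀ a b₁ b₂, H a (b₁ + b₂) = H a b₁ + H a b₂) :
    ((x.sum fun m c => Finsupp.single (p m) (φ m c)).sum H)
      = x.sum fun m c => H (p m) (φ m c) := by
  rw [Finsupp.sum_sum_index h0 hadd]
  exact Finsupp.sum_congr fun m _ => Finsupp.sum_single_index (h0 _)

private lemma sL0 : ∀ a : ℤ, Finsupp.single (2 * a) ((0:ℂ) / 2) = 0 := by simp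

private lemma sLadd : ∀ (a : ℤ) (b₁ b₂ : ℂ),
    Finsupp.single (2 * a) ((b₁ + b₂) / 2)
      = Finsupp.single (2 * a) (b₁ / 2) + Finsupp.single (2 * a) (b₂ / 2) := by
  intro a b₁ b₂; rw [add_div, Finsupp.single_add]

private lemma sG0 : ∀ a : ℤ, Finsupp.single (2 * a + 1) ((0:ℂ) / (Real.sqrt 2 : ℂ)) = 0 := by simp

private lemma sGadd : ∀ (a : ℤ) (b₁ b₂ : ℂ),
    Finsupp.single (2 * a + 1) ((b₁ + b₂) / (Real.sqrt 2 : ℂ))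
      = Finsupp.single (2 * a + 1) (b₁ / (Real.sqrt 2 : ℂ))
        + Finsupp.single (2 * a + 1) (b₂ / (Real.sqrt 2 : ℂ)) := by
  intro a b₁ b₂; rw [add_div, Finsupp.single_add]

private lemma sGsub : ∀ (a : ℤ) (b₁ b₂ : ℂ),
    Finsupp.single (2 * a + 1) ((b₁ - b₂) / (Real.sqrt 2 : ℂ))
      = Finsupp.single (2 * a + 1) (b₁ / (Real.sqrt 2 : ℂ))
        - Finsupp.single (2 * a + 1) (b₂ / (Real.sqrt 2 : ℂ)) := by
  intro a b₁ b₂; rw [sub_div, Finsupp.single_sub]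

private lemma sqrt2_sq : ((Real.sqrt 2 : ℝ) : ℂ) * ((Real.sqrt 2 : ℝ) : ℂ) = 2 := by
  norm_cast
  exact Real.mul_self_sqrt (by norm_num)

theorem aux_sigma_bracket (x y : SVSpace) :
    sigmaMap (nsBracket x y) = rBracket (sigmaMap x) (sigmaMap y) := by
  unfold sigmaMap nsBracket rBracket
  set s : ℂ := (Real.sqrt 2 : ℂ) with hs
  dsimp only
  refine Prod.ext ?_ ?_
  · -- even component
    dsimp only
    rw [Finsupp.sum_add_index' sL0 sLadd]
    congr 1
    · -- L-L part
      have lhs : ((x.1.sum fun m c => y.1.sum fun n d =>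
            Finsupp.single (m + n) (c * d * ((m : ℂ) - n))).sum
              fun a b => Finsupp.single (2*a) (b/2))
          = x.1.sum fun m c => y.1.sum fun n d =>
              Finsupp.single (2*(m+n)) ((c * d * ((m : ℂ) - n))/2) := by
        rw [Finsupp.sum_sum_index sL0 sLadd]
        exact Finsupp.sum_congr fun m _ =>
          sumSingle y.1 _ _ _ sL0 sLadd
      rw [lhs]
      rw [sumSingle x.1 (fun m => 2*m) (fun _ c => c/2)
        (fun M C => (y.1.sum fun n d => Finsupp.single (2*n) (d/2)).sum
          fun N D => Finsupp.single (M + N) (C * D * ((M : ℂ) - N)))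
        (by intro a; simp) (by intro a b₁ b₂; simp [add_mul, ← Finsupp.sum_add])]
      refine Finsupp.sum_congr fun m _ => ?_
      rw [sumSingle y.1 (fun n => 2*n) (fun _ d => d/2)
        (fun N D => Finsupp.single (2*m + N) ((x.1 m / 2) * D * (((2*m : ℤ) : ℂ) - N)))
        (by intro a; simp) (by intro a b₁ b₂; simp [mul_add, add_mul, Finsupp.single_add])]
      refine Finsupp.sum_congr fun n _ => ?_
      rw [show 2*(m+n) = 2*m + 2*n by ring]
      congr 1
      push_cast
      ring
    · -- G-G part
      have lhs : ((x.2.sum fun k c => y.2.sum fun j d =>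
            Finsupp.single (k + j + 1) (c * d * 2)).sum
              fun a b => Finsupp.single (2*a) (b/2))
          = x.2.sum fun k c => y.2.sum fun j d =>
              Finsupp.single (2*(k+j+1)) ((c * d * 2)/2) := by
        rw [Finsupp.sum_sum_index sL0 sLadd]
        exact Finsupp.sum_congr fun k _ =>
          sumSingle y.2 _ _ _ sL0 sLadd
      rw [lhs]
      rw [sumSingle x.2 (fun k => 2*k+1) (fun _ c => c/s)
        (fun M C => (y.2.sum fun j d => Finsupp.single (2*j+1) (d/s)).sum
          fun N D => Finsupp.single (M + N) (C * D * 2))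
        (by intro a; simp) (by intro a b₁ b₂; simp [add_mul, ← Finsupp.sum_add])]
      refine Finsupp.sum_congr fun k _ => ?_
      rw [sumSingle y.2 (fun j => 2*j+1) (fun _ d => d/s)
        (fun N D => Finsupp.single ((2*k+1) + N) ((x.2 k / s) * D * 2))
        (by intro a; simp) (by intro a b₁ b₂; simp [mul_add, add_mul, Finsupp.single_add])]
      refine Finsupp.sum_congr fun j _ => ?_
      rw [show 2*(k+j+1) = (2*k+1) + (2*j+1) by ring]
      congr 1
      have h2 : s * s = 2 := sqrt2_sq
      calc x.2 k * y.2 j * 2 / 2 = x.2 k * y.2 j * (2/2) := by ring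
        _ = x.2 k * y.2 j * (2/(s*s)) := by rw [h2]
        _ = x.2 k / s * (y.2 j / s) * 2 := by ring
  · -- odd component
    dsimp only
    rw [Finsupp.sum_sub_index sGsub]
    congr 1
    · -- L-G part
      have lhs : ((x.1.sum fun m c => y.2.sum fun k d =>
            Finsupp.single (m + k) (c * d * ((m : ℂ)/2 - ((k:ℂ) + 1/2)))).sum
              fun a b => Finsupp.single (2*a+1) (b/s))
          = x.1.sum fun m c => y.2.sum fun k d =>
              Finsupp.single (2*(m+k)+1) ((c * d * ((m : ℂ)/2 - ((k:ℂ) + 1/2)))/s) := by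
        rw [Finsupp.sum_sum_index sG0 sGadd]
        exact Finsupp.sum_congr fun m _ =>
          sumSingle y.2 _ _ _ sG0 sGadd
      rw [lhs]
      rw [sumSingle x.1 (fun m => 2*m) (fun _ c => c/2)
        (fun M C => (y.2.sum fun k d => Finsupp.single (2*k+1) (d/s)).sum
          fun N D => Finsupp.single (M + N) (C * D * ((M : ℂ)/2 - (N:ℂ))))
        (by intro a; simp) (by intro a b₁ b₂; simp [add_mul, ← Finsupp.sum_add])]
      refine Finsupp.sum_congr fun m _ => ?_
      rw [sumSingle y.2 (fun k => 2*k+1) (fun _ d => d/s)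
        (fun N D => Finsupp.single (2*m + N) ((x.1 m / 2) * D * ((((2*m:ℤ)) : ℂ)/2 - (N:ℂ))))
        (by intro a; simp) (by intro a b₁ b₂; simp [mul_add, add_mul, Finsupp.single_add])]
      refine Finsupp.sum_congr fun k _ => ?_
      rw [show 2*(m+k)+1 = 2*m + (2*k+1) by ring]
      congr 1
      push_cast
      ring
    · -- G-L part
      have lhs : ((y.1.sum fun m d => x.2.sum fun k c =>
            Finsupp.single (m + k) (d * c * ((m : ℂ)/2 - ((k:ℂ) + 1/2)))).sum
              fun a b => Finsupp.single (2*a+1) (b/s))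
          = y.1.sum fun m d => x.2.sum fun k c =>
              Finsupp.single (2*(m+k)+1) ((d * c * ((m : ℂ)/2 - ((k:ℂ) + 1/2)))/s) := by
        rw [Finsupp.sum_sum_index sG0 sGadd]
        exact Finsupp.sum_congr fun m _ =>
          sumSingle x.2 _ _ _ sG0 sGadd
      rw [lhs]
      rw [sumSingle y.1 (fun m => 2*m) (fun _ c => c/2)
        (fun M D => (x.2.sum fun k c => Finsupp.single (2*k+1) (c/s)).sum
          fun N C => Finsupp.single (M + N) (D * C * ((M : ℂ)/2 - (N:ℂ))))
        (by intro a; simp) (by intro a b₁ b₂; simp [add_mul, ← Finsupp.sum_add])]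
      refine Finsupp.sum_congr fun m _ => ?_
      rw [sumSingle x.2 (fun k => 2*k+1) (fun _ c => c/s)
        (fun N C => Finsupp.single (2*m + N) ((y.1 m / 2) * C * ((((2*m:ℤ)) : ℂ)/2 - (N:ℂ))))
        (by intro a; simp) (by intro a b₁ b₂; simp [mul_add, add_mul, Finsupp.single_add])]
      refine Finsupp.sum_congr fun k _ => ?_
      rw [show 2*(m+k)+1 = 2*m + (2*k+1) by ring]
      congr 1
      push_cast
      ring

private lemma sigma_eq (z : ℤ →₀ ℂ) :
    (z.sum fun m c => Finsupp.single (2*m) (c/2))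
      = Finsupp.mapDomain (fun m => 2*m) (z.mapRange (fun c => c / 2) (by simp)) := by
  rw [Finsupp.mapDomain, Finsupp.sum_mapRange_index (by simp)]

private lemma sigma_eq' (z : ℤ →₀ ℂ) :
    (z.sum fun k c => Finsupp.single (2*k+1) (c/(Real.sqrt 2 : ℂ)))
      = Finsupp.mapDomain (fun k => 2*k+1)
          (z.mapRange (fun c => c / (Real.sqrt 2 : ℂ)) (by simp)) := by
  rw [Finsupp.mapDomain, Finsupp.sum_mapRange_index (by simp)]

private lemma sqrt2_ne : ((Real.sqrt 2 : ℝ) : ℂ) ≠ 0 := by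
  simp only [ne_eq, Complex.ofReal_eq_zero]
  positivity

theorem aux_sigma_inj : Function.Injective sigmaMap := by
  intro a b hab
  have h1 := congrArg Prod.fst hab
  have h2 := congrArg Prod.snd hab
  simp only [sigmaMap] at h1 h2
  rw [sigma_eq, sigma_eq] at h1
  rw [sigma_eq', sigma_eq'] at h2
  have i1 : a.1 = b.1 := by
    have := Finsupp.mapDomain_injective (f := fun m : ℤ => 2*m) (fun p q h => by simp only at h; omega) h1
    exact Finsupp.mapRange_injective _ _ (fun p q h => by
      field_simp at h; exact h) this
  have i2 : a.2 = b.2 := by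
    have := Finsupp.mapDomain_injective (f := fun k : ℤ => 2*k+1) (fun p q h => by simp only at h; omega) h2
    exact Finsupp.mapRange_injective _ _ (fun p q h => by
      field_simp [sqrt2_ne] at h; exact h) this
  exact Prod.ext i1 i2

theorem aux_sigma_add (x y : SVSpace) : sigmaMap (x + y) = sigmaMap x + sigmaMap y := by
  unfold sigmaMap
  refine Prod.ext ?_ ?_
  · dsimp only [Prod.fst_add]
    exact Finsupp.sum_add_index' sL0 sLadd
  · dsimp only [Prod.snd_add]
    exact Finsupp.sum_add_index' sG0 sGadd

theorem aux_sigma_smul (c : ℂ) (x : SVSpace) : sigmaMap (c • x) = c • sigmaMap x := by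
  unfold sigmaMap
  refine Prod.ext ?_ ?_
  · dsimp only [Prod.smul_fst, Prod.smul_snd]
    rw [Finsupp.sum_smul_index (fun i => sL0 i), Finsupp.smul_sum]
    refine Finsupp.sum_congr fun m _ => ?_
    rw [Finsupp.smul_single', mul_div_assoc]
  · dsimp only [Prod.smul_fst, Prod.smul_snd]
    rw [Finsupp.sum_smul_index (fun i => sG0 i), Finsupp.smul_sum]
    refine Finsupp.sum_congr fun k _ => ?_
    rw [Finsupp.smul_single', mul_div_assoc]

/-- `σ` is an injective homomorphism of Lie superalgebras from the
Neveu-Schwarz algebra to the Ramond algebra. -/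
theorem sigma_injective_superalgebra_hom :
    Function.Injective sigmaMap
    ∧ (∀ x y : SVSpace, sigmaMap (x + y) = sigmaMap x + sigmaMap y)
    ∧ (∀ (c : ℂ) (x : SVSpace), sigmaMap (c • x) = c • sigmaMap x)
    ∧ (∀ x y : SVSpace, sigmaMap (nsBracket x y) = rBracket (sigmaMap x) (sigmaMap y)) := by
  exact ⟨aux_sigma_inj, aux_sigma_add, aux_sigma_smul, aux_sigma_bracket⟩
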